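/- arXiv:math/0303069 — 4 statements merged into one kernel-verified Lean document; each statement's English description precedes it below -/
import Mathlib

section
/- Let H be a Hopf algebra over a commutative ring k, δ: H → k a character, A a left H-module algebra, and Tr: A → k a k-linear map. Then Tr is δ-invariant, i.e. Tr(h(a)) = δ(h)·Tr(a) for all h ∈ H and a ∈ A, if and only if Tr satisfies the integration-by-parts property Tr(h(a)·b) = Tr(a·S̃_δ(h)(b)) for all h ∈ H and a, b ∈ A, where S̃_δ(h)=δ(h⁽¹⁾)S(h⁽²⁾) is the δ-twisted antipode. -/
open TensorProduct

section aux
variable {k : Type*} [CommRing k] {H : Type*} [Ring H] [HopfAlgebra k H]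

/-- `ε ∘ S = ε`. -/
lemma my_counit_antipode (y : H) :
    Coalgebra.counit (R := k) (HopfAlgebra.antipode (R := k) y)
      = Coalgebra.counit (R := k) y := by
  classical
  set r := Coalgebra.Repr.arbitrary k y with hr
  have e1 : ∑ j ∈ r.index,
      Coalgebra.counit (R := k) (r.left j) *
        Coalgebra.counit (R := k) (HopfAlgebra.antipode (R := k) (r.right j))
      = Coalgebra.counit (R := k) y := by
    have := congrArg (Coalgebra.counit (R := k)) (HopfAlgebra.sum_mul_antipode_eq_algebraMap_counit (R := k) r)
    simpa only [map_sum, Bialgebra.counit_mul, Bialgebra.counit_algebraMap] using this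
  have e2 : ∑ j ∈ r.index,
      Coalgebra.counit (R := k) (r.left j) *
        Coalgebra.counit (R := k) (HopfAlgebra.antipode (R := k) (r.right j))
      = Coalgebra.counit (R := k) (HopfAlgebra.antipode (R := k) y) := by
    have h := Coalgebra.sum_counit_tmul_map_eq (R := k)
      (f := (Coalgebra.counit (R := k)) ∘ₗ HopfAlgebra.antipode (R := k)) y (repr := r)
    have := congrArg (TensorProduct.lid k k) h
    simp only [map_sum, TensorProduct.lid_tmul, smul_eq_mul, one_mul,
      LinearMap.comp_apply] at this
    exact this
  rw [← e2, e1]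

/-- `h = ∑ ε(h⁽²⁾) • h⁽¹⁾`. -/
lemma my_repr_sum {h : H} (r : Coalgebra.Repr k h (H × H)) :
    ∑ i ∈ r.index, Coalgebra.counit (R := k) (r.right i) • r.left i = h := by
  have e := Coalgebra.sum_tmul_counit_eq (R := k) r
  have := congrArg (TensorProduct.rid k H) e
  simp only [map_sum, TensorProduct.rid_tmul, one_smul] at this
  exact this

end aux

/-- Let `H` be a Hopf algebra over a commutative ring `k`, `δ : H → k` a
character, `A` a left `H`-module algebra (with action `act`), and `Tr : A → k` a `k`-linear
map.  Then `Tr` is `δ`-invariant, i.e. `Tr(h(a)) = δ(h)·Tr(a)`, if and only if `Tr`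
satisfies the integration-by-parts property `Tr(h(a)·b) = Tr(a·S̃_δ(h)(b))`, where
`S̃_δ(h) = δ(h⁽¹⁾)S(h⁽²⁾)` is the `δ`-twisted antipode. -/
theorem statement1 (k : Type*) [CommRing k] (H : Type*) [Ring H] [HopfAlgebra k H]
    (A : Type*) [Ring A] [Algebra k A]
    -- the action of `H` on `A`
    (act : H →ₗ[k] A →ₗ[k] A)
    -- `A` is a left `H`-module …
    (hact_mul : ∀ g h : H, act (g * h) = act g ∘ₗ act h)
    (hact_one : act 1 = LinearMap.id)
    -- … and in fact a left `H`-module algebra:  `h(ab) = h⁽¹⁾(a)·h⁽²⁾(b)` and `h(1) = ε(h)1`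
    (hma_mul : ∀ (h : H) (a b : A),
      act h (a * b) =
        LinearMap.mul' k A
          (TensorProduct.map (act.flip a) (act.flip b) (Coalgebra.comul h)))
    (hma_one : ∀ h : H, act h 1 = Coalgebra.counit (R := k) h • (1 : A))
    -- a character `δ` and a linear functional `Tr`
    (δ : H →ₐ[k] k) (Tr : A →ₗ[k] k) :
    -- the `δ`-twisted antipode `S̃_δ(h) = δ(h⁽¹⁾)S(h⁽²⁾)`
    letI Stilde : H →ₗ[k] H :=
      (TensorProduct.lid k H).toLinearMap
        ∘ₗ TensorProduct.map δ.toLinearMap (HopfAlgebra.antipode (R := k))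
        ∘ₗ Coalgebra.comul
    ((∀ (h : H) (a : A), Tr (act h a) = δ h * Tr a) ↔
      (∀ (h : H) (a b : A), Tr (act h a * b) = Tr (a * act (Stilde h) b))) := by
  classical
  set Stilde : H →ₗ[k] H :=
      (TensorProduct.lid k H).toLinearMap
        ∘ₗ TensorProduct.map δ.toLinearMap (HopfAlgebra.antipode (R := k))
        ∘ₗ Coalgebra.comul with hStdef
  -- expansion of the twisted antipode along a representation
  have hSt : ∀ (h : H) (r : Coalgebra.Repr k h (H × H)),
      Stilde h = ∑ i ∈ r.index,
        δ (r.left i) • HopfAlgebra.antipode (R := k) (r.right i) := by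
    intro h r
    rw [hStdef]
    simp only [LinearMap.comp_apply]
    rw [← r.eq]
    simp only [map_sum, TensorProduct.map_tmul, LinearEquiv.coe_coe,
      TensorProduct.lid_tmul, AlgHom.toLinearMap_apply]
  constructor
  · -- invariance ⇒ integration by parts
    intro h1 h a b
    set S : H →ₗ[k] H := HopfAlgebra.antipode (R := k) with hS
    set r : Coalgebra.Repr k h (H × H) := Coalgebra.Repr.arbitrary k h with hr
    set r1 : ∀ i : r.ι, Coalgebra.Repr k (r.left i) (H × H) :=
      fun i => Coalgebra.Repr.arbitrary k (r.left i) with hr1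
    set r2 : ∀ i : r.ι, Coalgebra.Repr k (r.right i) (H × H) :=
      fun i => Coalgebra.Repr.arbitrary k (r.right i) with hr2
    -- the trilinear functional Φ(x ⊗ u ⊗ v) = Tr(act x a * act u (act (S v) b))
    set M : A →ₗ[k] A →ₗ[k] k := (LinearMap.mul k A).compr₂ Tr with hM
    set inner : H →ₗ[k] H →ₗ[k] A := act.compl₂ ((act.flip b) ∘ₗ S) with hinner
    set N : H →ₗ[k] A →ₗ[k] k := M ∘ₗ (act.flip a) with hN
    set Φ : H ⊗[k] (H ⊗[k] H) →ₗ[k] k :=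
      TensorProduct.lift (N.compl₂ (TensorProduct.lift inner)) with hΦ
    have hΦapp : ∀ x u v : H,
        Φ (x ⊗ₜ[k] (u ⊗ₜ[k] v)) = Tr (act x a * act u (act (S v) b)) := by
      intro x u v
      simp [hΦ, hN, hM, hinner, TensorProduct.lift.tmul]
    -- Step 1: expand `Tr (act h a * b)` as the right-hand double sum
    have step1 : Tr (act h a * b)
        = ∑ i ∈ r.index, ∑ j ∈ (r2 i).index,
            Φ (r.left i ⊗ₜ[k] ((r2 i).left j ⊗ₜ[k] (r2 i).right j)) := by
      have inner_sum : ∀ i : r.ι, ∑ j ∈ (r2 i).index,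
          act ((r2 i).left j) (act (S ((r2 i).right j)) b)
            = Coalgebra.counit (R := k) (r.right i) • b := by
        intro i
        have : ∀ j : (r2 i).ι, act ((r2 i).left j) (act (S ((r2 i).right j)) b)
            = act ((r2 i).left j * S ((r2 i).right j)) b := by
          intro j; rw [hact_mul]; rfl
        rw [Finset.sum_congr rfl fun j _ => this j, ← LinearMap.sum_apply, ← map_sum,
          HopfAlgebra.sum_mul_antipode_eq_smul (r2 i), map_smul, hact_one]
        rfl
      calc Tr (act h a * b)
          = ∑ i ∈ r.index, Coalgebra.counit (R := k) (r.right i)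
              • Tr (act (r.left i) a * b) := by
            conv_lhs => rw [← my_repr_sum r]
            simp only [map_sum, LinearMap.map_smul, LinearMap.sum_apply,
              LinearMap.smul_apply, Finset.sum_mul, smul_mul_assoc]
        _ = _ := by
            refine Finset.sum_congr rfl fun i _ => ?_
            calc Coalgebra.counit (R := k) (r.right i) • Tr (act (r.left i) a * b)
                = Tr (act (r.left i) a * (Coalgebra.counit (R := k) (r.right i) • b)) := by
                  rw [mul_smul_comm, map_smul]
              _ = Tr (act (r.left i) a * ∑ j ∈ (r2 i).index,
                    act ((r2 i).left j) (act (S ((r2 i).right j)) b)) := by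
                  rw [inner_sum i]
              _ = ∑ j ∈ (r2 i).index, Tr (act (r.left i) a *
                    act ((r2 i).left j) (act (S ((r2 i).right j)) b)) := by
                  rw [Finset.mul_sum, map_sum]
              _ = _ := Finset.sum_congr rfl fun j _ => (hΦapp _ _ _).symm
    -- Step 2: coassociativity
    have step2 : ∑ i ∈ r.index, ∑ j ∈ (r2 i).index,
          Φ (r.left i ⊗ₜ[k] ((r2 i).left j ⊗ₜ[k] (r2 i).right j))
        = ∑ i ∈ r.index, ∑ j ∈ (r1 i).index,
          Φ ((r1 i).left j ⊗ₜ[k] ((r1 i).right j ⊗ₜ[k] r.right i)) := by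
      have := congrArg Φ (Coalgebra.sum_tmul_tmul_eq (R := k) r r1 r2)
      simpa only [map_sum] using this.symm
    -- Step 3: recombine via the module-algebra axiom and apply invariance
    have step3 : ∀ i : r.ι, ∑ j ∈ (r1 i).index,
        Φ ((r1 i).left j ⊗ₜ[k] ((r1 i).right j ⊗ₜ[k] r.right i))
          = Tr (act (r.left i) (a * act (S (r.right i)) b)) := by
      intro i
      rw [hma_mul, ← (r1 i).eq]
      simp only [map_sum, TensorProduct.map_tmul, LinearMap.mul'_apply,
        LinearMap.flip_apply]
      exact Finset.sum_congr rfl fun j _ => hΦapp _ _ _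
    rw [step1, step2, Finset.sum_congr rfl fun i _ => step3 i,
      Finset.sum_congr rfl fun i _ => h1 _ _]
    -- Step 4: identify with the right-hand side
    rw [hSt h r, map_sum]
    simp only [LinearMap.map_smul, LinearMap.sum_apply, LinearMap.smul_apply,
      Finset.mul_sum, mul_smul_comm, map_sum, map_smul, smul_eq_mul]
  · -- integration by parts ⇒ invariance
    intro h2 h a
    have e := h2 h a 1
    rw [mul_one, hma_one] at e
    have hcount : Coalgebra.counit (R := k) (Stilde h) = δ h := by
      set r : Coalgebra.Repr k h (H × H) := Coalgebra.Repr.arbitrary k h with hr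
      rw [hSt h r, map_sum]
      simp only [map_smul, my_counit_antipode, smul_eq_mul]
      calc ∑ i ∈ r.index, δ (r.left i) * Coalgebra.counit (R := k) (r.right i)
          = δ (∑ i ∈ r.index, Coalgebra.counit (R := k) (r.right i) • r.left i) := by
            simp only [map_sum, map_smul, smul_eq_mul, mul_comm]
        _ = δ h := by rw [my_repr_sum r]
    rw [e, hcount, mul_smul_comm, mul_one, map_smul, smul_eq_mul]
end

section
/- Let H be a Hopf algebra over a commutative ring k with modular pair in involution (δ,σ), let A be a left H-module algebra, and let Tr: A → k be a k-linear map which is δ-invariant (Tr(h(a))=δ(h)Tr(a) for all h∈H, a∈A) and satisfies Tr(ab)=Tr(b·(σ·a)) for all a,b ∈ A. Define γ: H^{⊗n} → Hom_k(A^{⊗(n+1)},k) by γ(h₁⊗⋯⊗hₙ)(a₀⊗a₁⊗⋯⊗aₙ) = Tr(a₀·h₁(a₁)·h₂(a₂)⋯hₙ(aₙ)). Then γ is a morphism of cocyclic modules from the Connes–Moscovici cocyclic module H^{♮}_{(δ,σ)} to the cocyclic module A^♮ = Hom(A^{⊗(•+1)},k) of the algebra A; in particular γ(τ_H(h₁⊗⋯⊗hₙ))(a₀⊗⋯⊗aₙ)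 = γ(h₁⊗⋯⊗hₙ)(aₙ⊗a₀⊗⋯⊗a_{n-1}), and γ commutes with all cofaces and codegeneracies. -/
open TensorProduct Coalgebra

universe u

/-- Iterated tensor power `V ⊗ ⋯ ⊗ V ⊗ k` (`n` factors of `V`) as an object of
`AlgebraCat k`. -/
noncomputable def TPc (k : Type u) [CommRing k] (V : Type u) [Ring V] [Algebra k V] :
    ℕ → AlgCat k
  | 0 => AlgCat.of k k
  | n + 1 => AlgCat.of k (V ⊗[k] (TPc k V n))

/-- The `n`-th tensor power `V^{⊗n}` of `V` over `k`. -/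
noncomputable abbrev TP (k : Type u) [CommRing k] (V : Type u) [Ring V] [Algebra k V]
    (n : ℕ) : Type u := (TPc k V n)

variable (k : Type u) [CommRing k]

section generic
variable (V : Type u) [Ring V] [Algebra k V]

/-- Apply a linear functional `φ` to the first tensor factor. -/
noncomputable def cntFirst (φ : V →ₗ[k] k) (n : ℕ) : TP k V (n + 1) →ₗ[k] TP k V n :=
  (TensorProduct.lid k (TP k V n)).toLinearMap ∘ₗ LinearMap.rTensor (TP k V n) φ

/-- Append a fixed element `σ` as a last tensor factor. -/
noncomputable def appEnd (σ : V) : (n : ℕ) → TP k V n →ₗ[k] TP k V (n + 1)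
  | 0 => TensorProduct.mk k V (TP k V 0) σ
  | n + 1 => LinearMap.lTensor V (appEnd σ n)

/-- Multiply the `(i+1)`-st and `(i+2)`-nd tensor factors. -/
noncomputable def mulAt : (n : ℕ) → Fin (n + 1) → (TP k V (n + 2) →ₗ[k] TP k V (n + 1))
  | n, ⟨0, _⟩ =>
      LinearMap.rTensor (TP k V n) (LinearMap.mul' k V)
        ∘ₗ (TensorProduct.assoc k V V (TP k V n)).symm.toLinearMap
  | 0, ⟨_ + 1, h⟩ => absurd h (by omega)
  | n + 1, ⟨i + 1, h⟩ => LinearMap.lTensor V (mulAt n ⟨i, by omega⟩)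

/-- Cyclic rotation of the tensor factors: the last factor is moved to the front. -/
noncomputable def rot : (n : ℕ) → TP k V n →ₗ[k] TP k V n
  | 0 => LinearMap.id
  | 1 => LinearMap.id
  | n + 2 =>
      ((TensorProduct.assoc k V V (TP k V n)).toLinearMap
          ∘ₗ LinearMap.rTensor (TP k V n) (TensorProduct.comm k V V).toLinearMap
          ∘ₗ (TensorProduct.assoc k V V (TP k V n)).symm.toLinearMap)
        ∘ₗ LinearMap.lTensor V (rot (n + 1))

/-- The face maps of the cyclic module `A^♮` of an algebra `A`: faces `0 ≤ i ≤ n`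
multiply adjacent factors, the last face is the wrap-around face
`a₀⊗⋯⊗a_{n+1} ↦ a_{n+1}a₀⊗a₁⊗⋯⊗aₙ`. -/
noncomputable def faceA (n : ℕ) (i : Fin (n + 2)) : TP k V (n + 2) →ₗ[k] TP k V (n + 1) :=
  if h : (i : ℕ) = n + 1 then mulAt k V n 0 ∘ₗ rot k V (n + 2)
  else mulAt k V n ⟨(i : ℕ), by have := i.isLt; omega⟩

/-- The degeneracy maps of `A^♮`: insert a `1` after the `(i+1)`-st factor. -/
noncomputable def sdegA : (n : ℕ) → Fin (n + 1) → (TP k V (n + 1) →ₗ[k] TP k V (n + 2))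
  | n, ⟨0, _⟩ => LinearMap.lTensor V (TensorProduct.mk k V (TP k V n) 1)
  | 0, ⟨_ + 1, h⟩ => absurd h (by omega)
  | n + 1, ⟨i + 1, h⟩ => LinearMap.lTensor V (sdegA n ⟨i, by omega⟩)

end generic

section cm
variable (H : Type u) [Ring H]

section ops2
variable [Bialgebra k H]

/-- The Connes–Moscovici cofaces on `H^{⊗n}`. -/
noncomputable def cfCM (σ : H) : (n : ℕ) → Fin (n + 2) → (TP k H n →ₗ[k] TP k H (n + 1))
  | n, ⟨0, _⟩ => TensorProduct.mk k H (TP k H n) 1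
  | 0, ⟨1, _⟩ => appEnd k H σ 0
  | 0, ⟨_ + 2, h⟩ => absurd h (by omega)
  | n + 1, ⟨1, _⟩ =>
      (TensorProduct.assoc k H H (TP k H n)).toLinearMap
        ∘ₗ LinearMap.rTensor (TP k H n) (comul (R := k))
  | n + 1, ⟨i + 2, h⟩ => LinearMap.lTensor H (cfCM σ n ⟨i + 1, by omega⟩)

/-- The Connes–Moscovici codegeneracies on `H^{⊗(n+1)}`. -/
noncomputable def cdCM : (n : ℕ) → Fin (n + 1) → (TP k H (n + 1) →ₗ[k] TP k H n)
  | n, ⟨0, _⟩ => cntFirst k H (counit (R := k)) n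
  | 0, ⟨_ + 1, h⟩ => absurd h (by omega)
  | n + 1, ⟨i + 1, h⟩ => LinearMap.lTensor H (cdCM n ⟨i, by omega⟩)

/-- The iterated comultiplication `Δ^{n−1} : H → H^{⊗n}`. -/
noncomputable def deltaPow : (n : ℕ) → H →ₗ[k] TP k H n
  | 0 => counit (R := k)
  | n + 1 => LinearMap.lTensor H (deltaPow n) ∘ₗ comul (R := k)

end ops2

section ops3
variable [HopfAlgebra k H]

/-- The `δ`-twisted antipode `S̃_δ(h) = δ(h⁽¹⁾)S(h⁽²⁾)`. -/
noncomputable def StildeCM (δl : H →ₗ[k] k) : H →ₗ[k] H :=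
  (TensorProduct.lid k H).toLinearMap
    ∘ₗ TensorProduct.map δl (HopfAlgebra.antipode (R := k))
    ∘ₗ comul

/-- The Connes–Moscovici cyclic operator
`τ(h₁⊗⋯⊗hₙ) = Δ^{n−1}(S̃_δ(h₁)) · (h₂⊗⋯⊗hₙ⊗σ)`. -/
noncomputable def tauCM (δl : H →ₗ[k] k) (σ : H) : (n : ℕ) → TP k H n →ₗ[k] TP k H n
  | 0 => LinearMap.id
  | n + 1 =>
      LinearMap.mul' k (TP k H (n + 1))
        ∘ₗ TensorProduct.map (deltaPow k H (n + 1) ∘ₗ StildeCM k H δl) (appEnd k H σ n)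

end ops3
end cm

section gamma
variable (H : Type u) [Ring H] [Algebra k H] (A : Type u) [Ring A] [Algebra k A]

/-- `Ψ(h₁⊗⋯⊗hₙ)(a₁⊗⋯⊗aₙ) = h₁(a₁)·h₂(a₂)⋯hₙ(aₙ)`. -/
noncomputable def psiCh (act : H →ₗ[k] A →ₗ[k] A) :
    (n : ℕ) → TP k H n →ₗ[k] (TP k A n →ₗ[k] A)
  | 0 => LinearMap.toSpanSingleton k (TP k A 0 →ₗ[k] A) (Algebra.linearMap k A)
  | n + 1 =>
      LinearMap.llcomp (σ₁₂ := RingHom.id k) (σ₂₃ := RingHom.id k) k (A ⊗[k] TP k A n) (A ⊗[k] A) A (LinearMap.mul' k A)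
        ∘ₗ TensorProduct.homTensorHomMap (RingHom.id k) A (TP k A n) A A
        ∘ₗ TensorProduct.map act (psiCh act n)

/-- The Connes–Moscovici characteristic map
`γ(h₁⊗⋯⊗hₙ)(a₀⊗a₁⊗⋯⊗aₙ) = Tr(a₀·h₁(a₁)⋯hₙ(aₙ))`. -/
noncomputable def gammaCh (act : H →ₗ[k] A →ₗ[k] A) (Tr : A →ₗ[k] k) (n : ℕ) :
    TP k H n →ₗ[k] (TP k A (n + 1) →ₗ[k] k) :=
  (LinearMap.llcomp (σ₁₂ := RingHom.id k) (σ₂₃ := RingHom.id k) k (A ⊗[k] TP k A n) (A ⊗[k] A) k (Tr ∘ₗ LinearMap.mul' k A)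
      ∘ₗ LinearMap.lTensorHom A)
    ∘ₗ psiCh k H A act n

end gamma

attribute [reducible] TPc

section lemmas
variable {k : Type u} [CommRing k] {H : Type u} [Ring H] [Algebra k H]
  {A : Type u} [Ring A] [Algebra k A] (act : H →ₗ[k] A →ₗ[k] A)

lemma psi_zero (c : TP k H 0) (d : TP k A 0) :
    psiCh k H A act 0 c d = (show k from c) • (algebraMap k A (show k from d)) := rfl

lemma psi_succ (n : ℕ) (h : H) (x : TP k H n) (a : A) (y : TP k A n) :
    psiCh k H A act (n+1) (h ⊗ₜ x) (a ⊗ₜ y) = act h a * psiCh k H A act n x y := rfl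

lemma gamma_apply (Tr : A →ₗ[k] k) (n : ℕ) (x : TP k H n) (a : A) (t : TP k A n) :
    gammaCh k H A act Tr n x (a ⊗ₜ t) = Tr (a * psiCh k H A act n x t) := rfl

end lemmas

section lemmas2
variable {k : Type u} [CommRing k] {V : Type u} [Ring V] [Algebra k V]

lemma tp_mul (n : ℕ) (h h' : V) (x x' : TP k V n) :
    (show TP k V (n+1) from h ⊗ₜ x) * (show TP k V (n+1) from h' ⊗ₜ x') =
      (h * h') ⊗ₜ (x * x') := Algebra.TensorProduct.tmul_mul_tmul h h' x x'

/-- every element of `TP k V (n+1)` is a sum of `appEnd b t`. -/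
lemma indLast (n : ℕ) (P : TP k V (n+1) → Prop) (h0 : P 0)
    (hp : ∀ (b : V) (t : TP k V n), P (appEnd k V b n t))
    (ha : ∀ u v, P u → P v → P (u + v)) : ∀ s, P s := by
  induction n with
  | zero =>
    intro s
    refine TensorProduct.induction_on s h0 (fun b c => hp b c) ha
  | succ n ih =>
    intro s
    refine TensorProduct.induction_on s h0 (fun a y => ?_) ha
    refine ih (fun y => P (a ⊗ₜ y)) ?_ (fun b t => hp b (a ⊗ₜ t)) ?_ y
    · simpa using h0
    · intro u v hu hv
      rw [TensorProduct.tmul_add a u v]; exact ha _ _ hu hv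

lemma rot_appEnd (n : ℕ) (b : V) (t : TP k V n) :
    rot k V (n+1) (appEnd k V b n t) = b ⊗ₜ t := by
  induction n with
  | zero => rfl
  | succ n ih =>
    have key : ∀ y : TP k V n, ∀ a : V,
        rot k V (n+2) (a ⊗ₜ appEnd k V b n y) = b ⊗ₜ (a ⊗ₜ y) := by
      intro y a
      show ((TensorProduct.assoc k V V (TP k V n)).toLinearMap
          ∘ₗ LinearMap.rTensor (TP k V n) (TensorProduct.comm k V V).toLinearMap
          ∘ₗ (TensorProduct.assoc k V V (TP k V n)).symm.toLinearMap)
        (LinearMap.lTensor V (rot k V (n+1)) (a ⊗ₜ appEnd k V b n y)) = b ⊗ₜ (a ⊗ₜ y)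
      rw [LinearMap.lTensor_tmul, ih]
      rfl
    refine TensorProduct.induction_on t ?_ (fun a y => key y a) ?_
    · simp
    · intro u v hu hv
      rw [show appEnd k V b (n+1) (u + v) = appEnd k V b (n+1) u + appEnd k V b (n+1) v
          from map_add _ u v, map_add, hu, hv, tmul_add]

end lemmas2

section lemmas3
variable {k : Type u} [CommRing k] {H : Type u} [Ring H] [HopfAlgebra k H]
  {A : Type u} [Ring A] [Algebra k A] (act : H →ₗ[k] A →ₗ[k] A)

lemma psi_appEnd (σ : H) (n : ℕ) (x : TP k H n) (b : A) (t : TP k A n) :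
    psiCh k H A act (n+1) (appEnd k H σ n x) (appEnd k A b n t) =
      psiCh k H A act n x t * act σ b := by
  induction n with
  | zero =>
    show act σ b * ((show k from x) • algebraMap k A (show k from t)) = _
    rw [psi_zero, mul_smul_comm, smul_mul_assoc, Algebra.commutes]
  | succ n ih =>
    refine TensorProduct.induction_on x ?_ (fun h w => ?_) ?_
    · simp
    · refine TensorProduct.induction_on t ?_ (fun a t' => ?_) ?_
      · simp
      · show psiCh k H A act (n+2) (h ⊗ₜ appEnd k H σ n w) (a ⊗ₜ appEnd k A b n t') = _
        rw [psi_succ, ih, psi_succ, mul_assoc]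
      · intro u v hu hv
        simp only [map_add, LinearMap.add_apply, hu, hv, add_mul]
    · intro u v hu hv
      simp only [map_add, LinearMap.add_apply, hu, hv, add_mul]

lemma psi_delta
    (hact_mul : ∀ g h : H, act (g * h) = act g ∘ₗ act h)
    (hma_mul : ∀ (h : H) (a b : A),
      act h (a * b) =
        LinearMap.mul' k A
          (TensorProduct.map (act.flip a) (act.flip b) (Coalgebra.comul h)))
    (hma_one : ∀ h : H, act h 1 = Coalgebra.counit (R := k) h • (1 : A))
    (g : H) (n : ℕ) (x : TP k H n) (t : TP k A n) :
    psiCh k H A act n (deltaPow k H n g * x) t = act g (psiCh k H A act n x t) := by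
  induction n generalizing g with
  | zero =>
    have l1 : psiCh k H A act 0 (deltaPow k H 0 g * x) t
        = (counit (R := k) g * (show k from x)) • algebraMap k A (show k from t) := rfl
    simp only [l1, psi_zero, Algebra.algebraMap_eq_smul_one, map_smul, hma_one, smul_smul]
    rw [psi_zero, Algebra.algebraMap_eq_smul_one, map_smul, map_smul, hma_one, smul_smul,
      smul_smul]
    congr 1
    ring
  | succ n ih =>
    refine TensorProduct.induction_on x ?_ (fun h w => ?_) ?_
    · simp
    · refine TensorProduct.induction_on t ?_ (fun a t' => ?_) ?_
      · simp
      · have aux : ∀ z : H ⊗[k] H,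
            psiCh k H A act (n+1)
              ((LinearMap.lTensor H (deltaPow k H n) z) * (h ⊗ₜ w)) (a ⊗ₜ t') =
            LinearMap.mul' k A
              (TensorProduct.map (act.flip (act h a))
                (act.flip (psiCh k H A act n w t')) z) := by
          intro z
          refine TensorProduct.induction_on z ?_ (fun p q => ?_) ?_
          · simp
          · rw [LinearMap.lTensor_tmul, TensorProduct.map_tmul,
              tp_mul n p h (deltaPow k H n q) w, psi_succ, ih q, hact_mul,
              LinearMap.mul'_apply]
            rfl
          · intro u v hu hv
            simp only [map_add, add_mul, LinearMap.add_apply, hu, hv]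
        rw [show deltaPow k H (n+1) g
            = LinearMap.lTensor H (deltaPow k H n) (comul (R := k) g) from rfl,
          aux (comul g), ← hma_mul, psi_succ]
      · intro u v hu hv
        simp only [tmul_add, map_add, hu, hv]
    · intro u v hu hv
      simp only [mul_add, map_add, LinearMap.add_apply, hu, hv]

end lemmas3

section lemmas4
variable {k : Type u} [CommRing k]

/-- insert `1` before the `(i+1)`-st factor -/
noncomputable def insA (V : Type u) [Ring V] [Algebra k V] :
    (n : ℕ) → Fin (n + 1) → TP k V n →ₗ[k] TP k V (n + 1)
  | n, ⟨0, _⟩ => TensorProduct.mk k V (TP k V n) 1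
  | 0, ⟨_ + 1, h⟩ => absurd h (by omega)
  | n + 1, ⟨i + 1, h⟩ => LinearMap.lTensor V (insA V n ⟨i, by omega⟩)

variable {V : Type u} [Ring V] [Algebra k V]

lemma sdeg_eq : ∀ (n : ℕ) (i : Fin (n+1)),
    sdegA k V n i = LinearMap.lTensor V (insA V n i)
  | 0, ⟨0, _⟩ => rfl
  | n + 1, ⟨0, _⟩ => rfl
  | 0, ⟨_ + 1, h⟩ => absurd h (by omega)
  | n + 1, ⟨i + 1, h⟩ => by
    show LinearMap.lTensor V (sdegA k V n ⟨i, by omega⟩) = _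
    rw [sdeg_eq n ⟨i, by omega⟩]
    rfl

lemma cf_last {H : Type u} [Ring H] [Bialgebra k H] (σ : H) :
    ∀ n : ℕ, cfCM k H σ n ⟨n + 1, by omega⟩ = appEnd k H σ n
  | 0 => rfl
  | n + 1 => by
    show LinearMap.lTensor H (cfCM k H σ n ⟨n + 1, by omega⟩) = _
    rw [cf_last σ n]
    rfl

end lemmas4

section lemmas5
variable {k : Type u} [CommRing k] {H : Type u} [Ring H] [HopfAlgebra k H]
  {A : Type u} [Ring A] [Algebra k A] (act : H →ₗ[k] A →ₗ[k] A)

lemma psi_cd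
    (hma_one : ∀ h : H, act h 1 = Coalgebra.counit (R := k) h • (1 : A)) :
    ∀ (n : ℕ) (i : Fin (n + 1)) (x : TP k H (n + 1)) (t : TP k A n),
      psiCh k H A act n (cdCM k H n i x) t = psiCh k H A act (n + 1) x (insA A n i t)
  | n, ⟨0, _⟩, x, t => by
    refine TensorProduct.induction_on x ?_ (fun h w => ?_) ?_
    · simp
    · have l0 : cdCM k H n ⟨0, by omega⟩ = cntFirst k H (counit (R := k)) n := by
        cases n <;> rfl
      have l1 : cdCM k H n ⟨0, by omega⟩ (h ⊗ₜ w) = counit (R := k) h • w := by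
        rw [l0]
        show (TensorProduct.lid k (TP k H n)).toLinearMap
          (LinearMap.rTensor (TP k H n) (counit (R := k)) (h ⊗ₜ w)) = _
        rw [LinearMap.rTensor_tmul]
        rfl
      have l2 : insA A n ⟨0, by omega⟩ t = (1 : A) ⊗ₜ t := by
        cases n <;> rfl
      rw [l1, l2, map_smul, LinearMap.smul_apply, psi_succ, hma_one, smul_mul_assoc,
        one_mul]
    · intro u v hu hv
      simp only [map_add, LinearMap.add_apply, hu, hv]
  | 0, ⟨_ + 1, h⟩, _, _ => absurd h (by omega)
  | n + 1, ⟨i + 1, hi⟩, x, t => by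
    refine TensorProduct.induction_on x ?_ (fun h w => ?_) ?_
    · simp
    · refine TensorProduct.induction_on t ?_ (fun a t' => ?_) ?_
      · simp
      · rw [show cdCM k H (n+1) ⟨i+1, hi⟩ (h ⊗ₜ w)
              = h ⊗ₜ (cdCM k H n ⟨i, by omega⟩ w) from rfl,
          psi_succ, psi_cd hma_one n ⟨i, by omega⟩ w t',
          show insA A (n+1) ⟨i+1, hi⟩ (a ⊗ₜ t') = a ⊗ₜ (insA A n ⟨i, by omega⟩ t') from rfl,
          psi_succ]
      · intro u v hu hv
        simp only [map_add, tmul_add, LinearMap.add_apply, hu, hv]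
    · intro u v hu hv
      simp only [map_add, LinearMap.add_apply, hu, hv]

lemma psi_cf_mid (σ : H)
    (hma_mul : ∀ (h : H) (a b : A),
      act h (a * b) =
        LinearMap.mul' k A
          (TensorProduct.map (act.flip a) (act.flip b) (Coalgebra.comul h))) :
    ∀ (m : ℕ) (j : Fin (m + 1)) (x : TP k H (m + 1)) (t : TP k A (m + 2)),
      psiCh k H A act (m + 2) (cfCM k H σ (m + 1) ⟨(j : ℕ) + 1, by omega⟩ x) t
        = psiCh k H A act (m + 1) x (mulAt k A m j t)
  | m, ⟨0, _⟩, x, t => by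
    refine TensorProduct.induction_on x ?_ (fun h w => ?_) ?_
    · simp
    · refine TensorProduct.induction_on t ?_ (fun a s => ?_) ?_
      · simp
      · refine TensorProduct.induction_on s ?_ (fun b t' => ?_) ?_
        · simp
        · have aux : ∀ z : H ⊗[k] H,
              psiCh k H A act (m + 2)
                ((TensorProduct.assoc k H H (TP k H m)).toLinearMap (z ⊗ₜ w))
                (a ⊗ₜ (b ⊗ₜ t'))
              = LinearMap.mul' k A
                  (TensorProduct.map (act.flip a) (act.flip b) z)
                * psiCh k H A act m w t' := by
            intro z
            refine TensorProduct.induction_on z ?_ (fun p q => ?_) ?_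
            · rw [TensorProduct.zero_tmul, map_zero, map_zero, LinearMap.zero_apply,
                map_zero, map_zero, zero_mul]
            · rw [show (TensorProduct.assoc k H H (TP k H m)).toLinearMap ((p ⊗ₜ q) ⊗ₜ w)
                  = p ⊗ₜ (q ⊗ₜ w) from rfl, psi_succ, psi_succ, TensorProduct.map_tmul,
                LinearMap.mul'_apply, mul_assoc]
              rfl
            · intro u v hu hv
              simp only [add_tmul, map_add, LinearMap.add_apply, hu, hv, add_mul]
          have lm : mulAt k A m ⟨0, by omega⟩ (a ⊗ₜ (b ⊗ₜ t')) = (a * b) ⊗ₜ t' := by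
            cases m <;> rfl
          rw [show cfCM k H σ (m+1) ⟨1, by omega⟩ (h ⊗ₜ w)
              = (TensorProduct.assoc k H H (TP k H m)).toLinearMap
                  ((comul (R := k) h) ⊗ₜ w) from rfl,
            aux (comul h), lm, psi_succ, hma_mul]
        · intro u v hu hv
          simp only [map_add, tmul_add, LinearMap.add_apply, hu, hv]
      · intro u v hu hv
        simp only [map_add, LinearMap.add_apply, hu, hv]
    · intro u v hu hv
      simp only [map_add, LinearMap.add_apply, hu, hv]
  | 0, ⟨_ + 1, h⟩, _, _ => absurd h (by omega)
  | m + 1, ⟨j + 1, hj⟩, x, t => by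
    refine TensorProduct.induction_on x ?_ (fun h w => ?_) ?_
    · simp
    · refine TensorProduct.induction_on t ?_ (fun a t' => ?_) ?_
      · simp
      · rw [show cfCM k H σ (m+2) ⟨j+2, by omega⟩ (h ⊗ₜ w)
            = h ⊗ₜ (cfCM k H σ (m+1) ⟨j+1, by omega⟩ w) from rfl,
          psi_succ, psi_cf_mid σ hma_mul m ⟨j, by omega⟩ w t',
          show mulAt k A (m+1) ⟨j+1, hj⟩ (a ⊗ₜ t')
            = a ⊗ₜ (mulAt k A m ⟨j, by omega⟩ t') from rfl,
          psi_succ]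
      · intro u v hu hv
        simp only [map_add, tmul_add, LinearMap.add_apply, hu, hv]
    · intro u v hu hv
      simp only [map_add, LinearMap.add_apply, hu, hv]

end lemmas5

section lemmas6
variable {k : Type u} [CommRing k] {H : Type u} [Ring H] [HopfAlgebra k H]
  {A : Type u} [Ring A] [Algebra k A] (act : H →ₗ[k] A →ₗ[k] A)

/-- the fundamental `δ`-invariance property: `Tr(h(a)·b) = Tr(a·S̃_δ(h)(b))`. -/
lemma star_lemma (δ : H →ₐ[k] k) (Tr : A →ₗ[k] k)
    (hact_mul : ∀ g h : H, act (g * h) = act g ∘ₗ act h)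
    (hact_one : act 1 = LinearMap.id)
    (hma_mul : ∀ (h : H) (a b : A),
      act h (a * b) =
        LinearMap.mul' k A
          (TensorProduct.map (act.flip a) (act.flip b) (Coalgebra.comul h)))
    (hTrInv : ∀ (h : H) (a : A), Tr (act h a) = δ h * Tr a)
    (h : H) (a b : A) :
    Tr (a * act (StildeCM k H δ.toLinearMap h) b) = Tr (act h a * b) := by
  classical
  obtain ⟨S, hS⟩ := TensorProduct.exists_finset (comul (R := k) h)
  set Santi : H →ₗ[k] H := HopfAlgebra.antipode (R := k) with hSdef
  -- B2 (v ⊗ w) = act (v * S w) b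
  set B2 : H ⊗[k] H →ₗ[k] A :=
    (act.flip b) ∘ₗ LinearMap.mul' k H ∘ₗ LinearMap.lTensor H Santi with hB2
  -- T' ((u ⊗ v) ⊗ w) = act u a * act (v * S w) b
  set T' : (H ⊗[k] H) ⊗[k] H →ₗ[k] A :=
    LinearMap.mul' k A ∘ₗ TensorProduct.map (act.flip a) B2
      ∘ₗ (TensorProduct.assoc k H H H).toLinearMap with hT'
  have hB2app : ∀ v w : H, B2 (v ⊗ₜ w) = act v (act (Santi w) b) := by
    intro v w
    rw [show B2 (v ⊗ₜ w) = act (v * Santi w) b from rfl, hact_mul]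
    rfl
  have hT'app : ∀ (u v w : H), T' ((u ⊗ₜ v) ⊗ₜ w) = act u a * act v (act (Santi w) b) := by
    intro u v w
    rw [show T' ((u ⊗ₜ v) ⊗ₜ w) = act u a * B2 (v ⊗ₜ w) from rfl, hB2app]
  -- Step 1: expand StildeCM
  have st : act (StildeCM k H δ.toLinearMap h) b
      = ∑ i ∈ S, δ i.1 • act (Santi i.2) b := by
    rw [show StildeCM k H δ.toLinearMap h
        = (TensorProduct.lid k H).toLinearMap
            (TensorProduct.map δ.toLinearMap Santi (comul (R := k) h)) from rfl, hS]
    rw [map_sum, map_sum, map_sum, LinearMap.sum_apply]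
    refine Finset.sum_congr rfl (fun i _ => ?_)
    rw [TensorProduct.map_tmul, show (TensorProduct.lid k H).toLinearMap
        (δ.toLinearMap i.1 ⊗ₜ Santi i.2) = δ i.1 • Santi i.2 from rfl, map_smul,
      LinearMap.smul_apply]
  have step1 : Tr (a * act (StildeCM k H δ.toLinearMap h) b)
      = ∑ i ∈ S, Tr (act i.1 (a * act (Santi i.2) b)) := by
    rw [st, Finset.mul_sum, map_sum]
    refine Finset.sum_congr rfl (fun i _ => ?_)
    rw [mul_smul_comm, map_smul, smul_eq_mul, ← hTrInv]
  -- Step 2: rewrite via T'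
  have c1 : ∀ f g : H, act f (a * act (Santi g) b) = T' ((comul (R := k) f) ⊗ₜ g) := by
    intro f g
    rw [hma_mul]
    have : ∀ z : H ⊗[k] H,
        LinearMap.mul' k A (TensorProduct.map (act.flip a)
          (act.flip (act (Santi g) b)) z) = T' (z ⊗ₜ g) := by
      intro z
      refine TensorProduct.induction_on z (by simp) (fun u v => ?_) ?_
      · rw [TensorProduct.map_tmul, LinearMap.mul'_apply, hT'app]
        rfl
      · intro u v hu hv
        rw [map_add, map_add, TensorProduct.add_tmul, map_add, hu, hv]
    exact this _
  have step2 : ∑ i ∈ S, Tr (act i.1 (a * act (Santi i.2) b))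
      = Tr (T' (LinearMap.rTensor H (comul (R := k)) (comul (R := k) h))) := by
    rw [hS, map_sum, map_sum, map_sum]
    refine Finset.sum_congr rfl (fun i _ => ?_)
    rw [c1, LinearMap.rTensor_tmul]
  -- Step 3: coassociativity
  have coa : LinearMap.rTensor H (comul (R := k)) (comul (R := k) h)
      = (TensorProduct.assoc k H H H).symm
          (LinearMap.lTensor H (comul (R := k)) (comul (R := k) h)) := by
    have := congrArg (fun (f : H →ₗ[k] H ⊗[k] (H ⊗[k] H)) => f h) (Coalgebra.coassoc (R := k) (A := H))
    simp only [LinearMap.comp_apply, LinearEquiv.coe_coe] at this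
    rw [← this, LinearEquiv.symm_apply_apply]
  -- Step 4: compute T' ∘ assoc.symm on f ⊗ comul g
  have c2 : ∀ f g : H,
      T' ((TensorProduct.assoc k H H H).symm (f ⊗ₜ comul (R := k) g))
        = counit (R := k) g • (act f a * act 1 b) := by
    intro f g
    have e1 : ∀ z : H ⊗[k] H, T' ((TensorProduct.assoc k H H H).symm (f ⊗ₜ z))
        = act f a * B2 z := by
      intro z
      rw [hT', LinearMap.comp_apply, LinearMap.comp_apply, LinearEquiv.coe_coe,
        LinearEquiv.apply_symm_apply, TensorProduct.map_tmul, LinearMap.mul'_apply]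
      rfl
    rw [e1]
    have e2 : B2 (comul (R := k) g) = counit (R := k) g • act 1 b := by
      rw [hB2, LinearMap.comp_apply, LinearMap.comp_apply,
        show LinearMap.mul' k H (LinearMap.lTensor H Santi (comul (R := k) g))
          = (LinearMap.mul' k H ∘ₗ LinearMap.lTensor H Santi ∘ₗ comul (R := k)) g from rfl,
        HopfAlgebra.mul_antipode_lTensor_comul, LinearMap.comp_apply,
        show Algebra.linearMap k H (counit (R := k) g)
          = counit (R := k) g • (1 : H) from Algebra.algebraMap_eq_smul_one _,
        map_smul]
      rfl
    rw [e2, mul_smul_comm]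
  -- Step 5: put together
  have step5 : Tr (T' ((TensorProduct.assoc k H H H).symm
      (LinearMap.lTensor H (comul (R := k)) (comul (R := k) h))))
      = Tr (act h a * act 1 b) := by
    have hrep : ∀ f : H, Tr (act f a * act 1 b)
        = (Tr ∘ₗ LinearMap.mulRight k (act 1 b) ∘ₗ act.flip a) f := fun f => rfl
    rw [hS, map_sum, map_sum, map_sum, map_sum]
    have : ∑ i ∈ S, Tr (T' ((TensorProduct.assoc k H H H).symm
        (LinearMap.lTensor H (comul (R := k)) (i.1 ⊗ₜ i.2))))
        = ∑ i ∈ S, counit (R := k) i.2 • Tr (act i.1 a * act 1 b) := by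
      refine Finset.sum_congr rfl (fun i _ => ?_)
      rw [LinearMap.lTensor_tmul, c2, map_smul]
    rw [this]
    have hmid : ∑ i ∈ S, counit (R := k) i.2 • Tr (act i.1 a * act 1 b)
        = (Tr ∘ₗ LinearMap.mulRight k (act 1 b) ∘ₗ act.flip a)
            (∑ i ∈ S, counit (R := k) i.2 • i.1) := by
      rw [map_sum]
      exact Finset.sum_congr rfl (fun i _ => by rw [map_smul, hrep])
    -- ∑ ε(gᵢ) • fᵢ = h
    have := Coalgebra.lTensor_counit_comul (R := k) h
    rw [hS, map_sum] at this
    have happ := congrArg (TensorProduct.rid k H).toLinearMap this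
    rw [map_sum] at happ
    have : ∑ i ∈ S, counit (R := k) i.2 • i.1 = h := by
      have e3 : ∀ i : H × H, (TensorProduct.rid k H).toLinearMap
          (LinearMap.lTensor H (counit (R := k)) (i.1 ⊗ₜ i.2))
          = counit (R := k) i.2 • i.1 := by
        intro i
        rw [LinearMap.lTensor_tmul]
        rfl
      calc ∑ i ∈ S, counit (R := k) i.2 • i.1
          = ∑ i ∈ S, (TensorProduct.rid k H).toLinearMap
              (LinearMap.lTensor H (counit (R := k)) (i.1 ⊗ₜ i.2)) := by
            exact (Finset.sum_congr rfl (fun i _ => (e3 i))).symm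
        _ = (TensorProduct.rid k H).toLinearMap (h ⊗ₜ (1 : k)) := by rw [← happ]
        _ = h := by simp
    rw [hmid, this]
    exact (hrep h).symm
  rw [step1, step2, coa, step5, hact_one]
  rfl

end lemmas6

/-- Let `H` be a Hopf algebra over a commutative ring `k` with modular
pair in involution `(δ,σ)`, `A` a left `H`-module algebra, and `Tr : A → k` a linear map
which is `δ`-invariant and satisfies `Tr(ab) = Tr(b·(σa))`.  Then the characteristic map
`γ(h₁⊗⋯⊗hₙ)(a₀⊗⋯⊗aₙ) = Tr(a₀·h₁(a₁)⋯hₙ(aₙ))` is a morphism of cocyclic modules from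
the Connes–Moscovici cocyclic module `H^♮_{(δ,σ)}` to the cocyclic module
`A^♮ = Hom(A^{⊗(•+1)}, k)` of the algebra `A`: it commutes with all cofaces and
codegeneracies, and intertwines the cyclic operators. -/
theorem statement2 (k : Type u) [CommRing k] (H : Type u) [Ring H] [HopfAlgebra k H]
    (A : Type u) [Ring A] [Algebra k A]
    (δ : H →ₐ[k] k) (σ σinv : H)
    -- `σ` is grouplike with inverse `σinv`
    (hΔσ : comul (R := k) σ = σ ⊗ₜ[k] σ) (hεσ : counit (R := k) σ = 1)
    (hσinv : σ * σinv = 1) (hσinv' : σinv * σ = 1)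
    -- `(δ, σ)` is a modular pair in involution
    (hmp : δ σ = 1)
    (hinv : ∀ h : H,
      σinv * StildeCM k H δ.toLinearMap (σinv * StildeCM k H δ.toLinearMap h) = h)
    -- the action making `A` a left `H`-module algebra
    (act : H →ₗ[k] A →ₗ[k] A)
    (hact_mul : ∀ g h : H, act (g * h) = act g ∘ₗ act h)
    (hact_one : act 1 = LinearMap.id)
    (hma_mul : ∀ (h : H) (a b : A),
      act h (a * b) =
        LinearMap.mul' k A
          (TensorProduct.map (act.flip a) (act.flip b) (Coalgebra.comul h)))
    (hma_one : ∀ h : H, act h 1 = Coalgebra.counit (R := k) h • (1 : A))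
    -- the `δ`-invariant `σ`-trace `Tr`
    (Tr : A →ₗ[k] k)
    (hTrInv : ∀ (h : H) (a : A), Tr (act h a) = δ h * Tr a)
    (hTrTw : ∀ a b : A, Tr (a * b) = Tr (b * act σ a)) :
    -- `γ` commutes with the cofaces …
    (∀ (n : ℕ) (i : Fin (n + 2)) (x : TP k H n),
      gammaCh k H A act Tr (n + 1) (cfCM k H σ n i x) =
        gammaCh k H A act Tr n x ∘ₗ faceA k A n i) ∧
    -- … with the codegeneracies …
    (∀ (n : ℕ) (i : Fin (n + 1)) (x : TP k H (n + 1)),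
      gammaCh k H A act Tr n (cdCM k H n i x) =
        gammaCh k H A act Tr (n + 1) x ∘ₗ sdegA k A n i) ∧
    -- … and with the cyclic operators:
    -- `γ(τ_H(h₁⊗⋯⊗hₙ))(a₀⊗⋯⊗aₙ) = γ(h₁⊗⋯⊗hₙ)(aₙ⊗a₀⊗⋯⊗a_{n−1})`
    (∀ (n : ℕ) (x : TP k H n),
      gammaCh k H A act Tr n (tauCM k H δ.toLinearMap σ n x) =
        gammaCh k H A act Tr n x ∘ₗ rot k A (n + 1)) := by
    classical
  refine ⟨?_, ?_, ?_⟩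
  · -- cofaces
    intro n i x
    rcases i with ⟨iv, hi⟩
    match iv, hi with
    | 0, hi =>
      have hcf : cfCM k H σ n ⟨0, hi⟩ x = (1:H) ⊗ₜ x := by
        cases n <;> rfl
      have hfa : faceA k A n ⟨0, hi⟩ = mulAt k A n ⟨0, by omega⟩ := by
        rw [faceA, dif_neg (show ¬((0:ℕ) = n + 1) by omega)]
      rw [hcf, hfa]
      refine LinearMap.ext (fun s => ?_)
      refine TensorProduct.induction_on s (by simp) (fun a₀ t => ?_) ?_
      · refine TensorProduct.induction_on t (by simp) (fun a₁ y => ?_) ?_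
        · have hm : mulAt k A n ⟨0, by omega⟩ (a₀ ⊗ₜ (a₁ ⊗ₜ y)) = (a₀ * a₁) ⊗ₜ y := by
            cases n <;> rfl
          rw [LinearMap.comp_apply, hm, gamma_apply,
            gamma_apply, psi_succ, hact_one, LinearMap.id_coe, id_eq, mul_assoc]
        · intro u v hu hv
          simp only [tmul_add, map_add, LinearMap.comp_apply, LinearMap.add_apply, hu, hv]
      · intro u v hu hv
        simp only [map_add, LinearMap.comp_apply, LinearMap.add_apply, hu, hv]
    | j + 1, hi =>
      by_cases hlast : j + 1 = n + 1
      · -- last coface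
        cases Nat.succ_injective hlast
        have hfa : faceA k A n ⟨n + 1, hi⟩
            = mulAt k A n 0 ∘ₗ rot k A (n + 2) := by
          rw [faceA, dif_pos rfl]
        rw [cf_last σ n, hfa]
        refine LinearMap.ext (fun s => ?_)
        refine indLast (n + 1)
            (fun s' => gammaCh k H A act Tr (n + 1) (appEnd k H σ n x) s'
              = (gammaCh k H A act Tr n x ∘ₗ mulAt k A n 0 ∘ₗ rot k A (n + 2)) s')
            ?_ (fun b t => ?_) ?_ s
        · rw [map_zero, map_zero]
        · refine TensorProduct.induction_on t (by simp) (fun a₀ y => ?_) ?_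
          · have e1 : appEnd k A b (n + 1) (a₀ ⊗ₜ y) = a₀ ⊗ₜ appEnd k A b n y := by
              cases n <;> rfl
            have hm : mulAt k A n 0 (b ⊗ₜ (a₀ ⊗ₜ y)) = (b * a₀) ⊗ₜ y := by
              cases n <;> rfl
            rw [LinearMap.comp_apply, LinearMap.comp_apply, rot_appEnd, hm, e1,
              gamma_apply, gamma_apply, psi_appEnd, ← mul_assoc, ← hTrTw, mul_assoc]
          · intro u v hu hv
            simp only [tmul_add, map_add, LinearMap.comp_apply, LinearMap.add_apply, hu, hv]
        · intro u v hu hv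
          simp only [map_add, LinearMap.comp_apply, LinearMap.add_apply, hu, hv]
      · -- middle cofaces
        have hj : j + 1 ≤ n := by omega
        cases n with
        | zero => omega
        | succ m =>
          have hfa : faceA k A (m + 1) ⟨j + 1, hi⟩
              = mulAt k A (m + 1) ⟨j + 1, by omega⟩ := by
            rw [faceA, dif_neg (show ¬((j + 1 : ℕ) = m + 1 + 1) by omega)]
          rw [hfa]
          refine LinearMap.ext (fun s => ?_)
          refine TensorProduct.induction_on s (by simp) (fun a₀ t => ?_) ?_
          · have hm : mulAt k A (m + 1) ⟨j + 1, by omega⟩ (a₀ ⊗ₜ t)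
                = a₀ ⊗ₜ (mulAt k A m ⟨j, by omega⟩ t) := rfl
            rw [LinearMap.comp_apply, hm, gamma_apply, gamma_apply,
              psi_cf_mid act σ hma_mul m ⟨j, by omega⟩ x t]
          · intro u v hu hv
            simp only [map_add, LinearMap.comp_apply, LinearMap.add_apply, hu, hv]
  · -- codegeneracies
    intro n i x
    refine LinearMap.ext (fun s => ?_)
    refine TensorProduct.induction_on s (by simp) (fun a₀ t => ?_) ?_
    · have hs : sdegA k A n i (a₀ ⊗ₜ t) = a₀ ⊗ₜ (insA A n i t) := by
        rw [sdeg_eq]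
        rfl
      rw [gamma_apply, psi_cd act hma_one n i x t, LinearMap.comp_apply, hs, gamma_apply]
    · intro u v hu hv
      simp only [map_add, LinearMap.comp_apply, LinearMap.add_apply, hu, hv]
  · -- cyclic operator
    intro n x
    cases n with
    | zero =>
      rw [show tauCM k H δ.toLinearMap σ 0 = LinearMap.id from rfl,
        show rot k A 1 = LinearMap.id from rfl, LinearMap.id_coe, id_eq,
        LinearMap.comp_id]
    | succ n =>
      refine TensorProduct.induction_on x (by simp) (fun h w => ?_) ?_
      · refine LinearMap.ext (fun s => ?_)
        refine indLast (n + 1)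
            (fun s' => gammaCh k H A act Tr (n + 1)
                (tauCM k H δ.toLinearMap σ (n + 1) (h ⊗ₜ w)) s'
              = (gammaCh k H A act Tr (n + 1) (h ⊗ₜ w) ∘ₗ rot k A (n + 1 + 1)) s')
            ?_ (fun b t => ?_) ?_ s
        · rw [map_zero, map_zero]
        · refine TensorProduct.induction_on t (by simp) (fun a₀ y => ?_) ?_
          · have e1 : appEnd k A b (n + 1) (a₀ ⊗ₜ y) = a₀ ⊗ₜ appEnd k A b n y := by
              cases n <;> rfl
            have ht : tauCM k H δ.toLinearMap σ (n + 1) (h ⊗ₜ w)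
                = deltaPow k H (n + 1) (StildeCM k H δ.toLinearMap h)
                  * appEnd k H σ n w := by
              rw [show tauCM k H δ.toLinearMap σ (n + 1) (h ⊗ₜ w)
                  = LinearMap.mul' k (TP k H (n + 1))
                      (((deltaPow k H (n + 1) ∘ₗ StildeCM k H δ.toLinearMap) h)
                        ⊗ₜ appEnd k H σ n w) from rfl,
                LinearMap.mul'_apply]
              rfl
            rw [LinearMap.comp_apply, rot_appEnd, e1, ht, gamma_apply,
              psi_delta act hact_mul hma_mul hma_one, psi_appEnd,
              star_lemma act δ Tr hact_mul hact_one hma_mul hTrInv,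
              gamma_apply, psi_succ, ← mul_assoc, ← hTrTw]
          · intro u v hu hv
            simp only [tmul_add, map_add, LinearMap.comp_apply, LinearMap.add_apply, hu, hv]
        · intro u v hu hv
          simp only [map_add, LinearMap.comp_apply, LinearMap.add_apply, hu, hv]
      · intro u v hu hv
        rw [show tauCM k H δ.toLinearMap σ (n+1) (u + v)
            = tauCM k H δ.toLinearMap σ (n+1) u + tauCM k H δ.toLinearMap σ (n+1) v
            from map_add _ u v, map_add, hu, hv, map_add, LinearMap.add_comp]
end

section
/- Let A be a unital algebra over a commutative ring k, let δ₁, δ₂: A → A be two derivations with δ₁δ₂ = δ₂δ₁, and let τ: A → k be an invariant trace, i.e. τ(ab)=τ(ba) and τ(δ₁(a))=τ(δ₂(a))=0 for all a, b ∈ A. Then the trilinear functional φ(a₀,a₁,a₂) = τ(a₀(δ₁(a₁)δ₂(a₂) − δ₂(a₁)δ₁(a₂))) is a cyclic 2-cocycle on A: it is cyclically invariant, φ(a₂,a₀,a₁)=φ(a₀,a₁,a₂), and its Hochschild coboundary vanishes: φ(a₀a₁,a₂,a₃) − φ(a₀,a₁a₂,a₃) + φ(a₀,a₁,a₂a₃)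 − φ(a₃a₀,a₁,a₂) = 0 for all a₀,a₁,a₂,a₃ ∈ A. -/
/-- Let `A` be a unital algebra over a commutative ring `k`, let
`δ₁ δ₂ : A → A` be two commuting derivations and `τ : A → k` an invariant trace
(i.e. a trace vanishing on the images of `δ₁` and `δ₂`).  Then
`φ(a₀,a₁,a₂) = τ(a₀(δ₁(a₁)δ₂(a₂) − δ₂(a₁)δ₁(a₂)))` is a cyclic 2-cocycle on `A`:
it is cyclically invariant and its Hochschild coboundary vanishes. -/
theorem statement3 (k : Type*) [CommRing k] (A : Type*) [Ring A] [Algebra k A]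
    (d1 d2 : A →ₗ[k] A)
    (hd1 : ∀ a b : A, d1 (a * b) = d1 a * b + a * d1 b)
    (hd2 : ∀ a b : A, d2 (a * b) = d2 a * b + a * d2 b)
    (hcomm : ∀ a : A, d1 (d2 a) = d2 (d1 a))
    (τ : A →ₗ[k] k)
    (htrace : ∀ a b : A, τ (a * b) = τ (b * a))
    (hinv1 : ∀ a : A, τ (d1 a) = 0)
    (hinv2 : ∀ a : A, τ (d2 a) = 0) :
    (∀ a0 a1 a2 : A,
      τ (a2 * (d1 a0 * d2 a1 - d2 a0 * d1 a1)) =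
        τ (a0 * (d1 a1 * d2 a2 - d2 a1 * d1 a2))) ∧
    (∀ a0 a1 a2 a3 : A,
      τ ((a0 * a1) * (d1 a2 * d2 a3 - d2 a2 * d1 a3))
        - τ (a0 * (d1 (a1 * a2) * d2 a3 - d2 (a1 * a2) * d1 a3))
        + τ (a0 * (d1 a1 * d2 (a2 * a3) - d2 a1 * d1 (a2 * a3)))
        - τ ((a3 * a0) * (d1 a1 * d2 a2 - d2 a1 * d1 a2)) = 0) := by
  constructor
  · intro a0 a1 a2
    have e1 := hinv2 (a2 * (d1 a0 * a1))
    have e2 := hinv1 (a2 * (d2 a0 * a1))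
    have e3 := hinv1 (d2 a0 * (a1 * a2))
    have e4 := hinv2 (d1 a0 * (a1 * a2))
    have e5 := hinv2 (a0 * (d1 a1 * a2))
    have e6 := hinv1 (a0 * (d2 a1 * a2))
    have r1 := htrace (d2 a2) (d1 a0 * a1)
    have r2 := htrace (d1 a2) (d2 a0 * a1)
    simp only [hd1, hd2, hcomm, mul_add, add_mul, map_add, mul_assoc]
      at e1 e2 e3 e4 e5 e6 r1 r2
    simp only [mul_sub, map_sub]
    linear_combination e1 - e2 + e3 - e4 + e6 - e5 - r1 + r2
  · intro a0 a1 a2 a3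
    have h1 := htrace a3 (a0 * (d1 a1 * d2 a2))
    have h2 := htrace a3 (a0 * (d2 a1 * d1 a2))
    simp only [mul_assoc] at h1 h2
    simp only [hd1, hd2, sub_mul, mul_sub, mul_add, add_mul, map_add, map_sub,
      mul_assoc]
    linear_combination h2 - h1
end

section
/- Let (A, H, M) be a left Hopf triple over a commutative ring k with grouplike element σ ∈ H such that (M,σ) is a matched pair in involution (σm = m for all m ∈ M, and Ŝ(m⊗h) = h⁽²⁾m ⊗ σS(h⁽¹⁾) satisfies Ŝ² = id on M⊗H). Then for every a ∈ A and m ∈ M, writing the three-fold iterated coaction of A as a ↦ a⁽⁻³⁾⊗a⁽⁻²⁾⊗a⁽⁻¹⁾⊗a⁽⁰⁾ ∈ H⊗H⊗H⊗A, the following identity holds in H ⊗ M ⊗ A: a⁽⁻¹⁾σS(a⁽⁻³⁾) ⊗ a⁽⁻²⁾m ⊗ a⁽⁰⁾ = σ ⊗ a⁽⁻¹⁾m ⊗ a⁽⁰⁾. -/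
/-!
Write `Ŝ(n ⊗ h) = h₍₂₎n ⊗ σS(h₍₁₎)` and `x ▷ (n ⊗ g) = x₍₂₎n ⊗ gS(x₍₁₎)`. Since `Δ` is
multiplicative and `S` anti-multiplicative, `Ŝ(n ⊗ xf) = x ▷ Ŝ(n ⊗ f)`. Hence `Ŝ` maps
`X = h₍₂₎ · Ŝ(m ⊗ h₍₁₎) = h₍₂₎m ⊗ h₍₃₎σS(h₍₁₎)` (left multiplication in the `H`-leg) to
`h₍₂₎ ▷ Ŝ²(m ⊗ h₍₁₎) = h₍₃₎m ⊗ h₍₁₎S(h₍₂₎) = hm ⊗ 1`, which is also `Ŝ(hm ⊗ σ)` because `σ` acts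
trivially and `σS(σ) = 1`. As `Ŝ` is an involution, `X = hm ⊗ σ`, i.e.
`h₍₃₎σS(h₍₁₎) ⊗ h₍₂₎m = σ ⊗ hm`; the theorem is this identity on the `H`-leg of the coaction.
-/

open TensorProduct Coalgebra

open LinearMap in
lemma apply_iterated_comul_eq_assoc_rTensor {k H A N P : Type*} [CommSemiring k]
    [AddCommMonoid H] [Module k H] [Coalgebra k H] [AddCommMonoid A] [Module k A]
    [AddCommMonoid N] [Module k N] [AddCommMonoid P] [Module k P]
    (Φ : H ⊗[k] (H ⊗[k] H) →ₗ[k] N ⊗[k] P)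
    (L : H ⊗[k] (H ⊗[k] (H ⊗[k] A)) →ₗ[k] N ⊗[k] (P ⊗[k] A))
    (hL : ∀ p r s b,
      L (p ⊗ₜ (r ⊗ₜ (s ⊗ₜ b))) = TensorProduct.assoc k N P A (Φ (p ⊗ₜ (r ⊗ₜ s)) ⊗ₜ b))
    (w : H ⊗[k] A) :
    L (lTensor H ((TensorProduct.assoc k H H A).toLinearMap ∘ₗ rTensor A comul)
        (((TensorProduct.assoc k H H A).toLinearMap ∘ₗ rTensor A comul) w))
      = TensorProduct.assoc k N P A (rTensor A (Φ ∘ₗ comul.lTensor H ∘ₗ comul) w) := by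
  have hL' : L ∘ₗ lTensor H (TensorProduct.assoc k H H A).toLinearMap
        ∘ₗ (TensorProduct.assoc k H (H ⊗[k] H) A).toLinearMap
      = (TensorProduct.assoc k N P A).toLinearMap ∘ₗ rTensor A Φ := by
    ext p r s b
    exact hL p r s b
  have hnat := LinearMap.congr_fun
    (lTensor_rTensor_comp_assoc H (P := H) (Q := A) (comul (R := k) (A := H)))
    (rTensor A comul w)
  simp only [lTensor_comp, rTensor_comp, comp_apply, LinearEquiv.coe_coe] at hnat ⊢
  rw [hnat]
  exact LinearMap.congr_fun hL' _

section TwistedAntipode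

open HopfAlgebra LinearMap

variable {k H M : Type*} [CommSemiring k] [Semiring H] [HopfAlgebra k H]
  [AddCommMonoid M] [Module k M] (σ : H) (act : H →ₗ[k] M →ₗ[k] M)

noncomputable def twistedFlip : M ⊗[k] (H ⊗[k] H) →ₗ[k] M ⊗[k] H :=
  (TensorProduct.comm k H M).toLinearMap
    ∘ₗ lTensor H (lift act.flip)
    ∘ₗ (TensorProduct.leftComm k M H H).toLinearMap
    ∘ₗ lTensor M (rTensor H (mulLeft k σ ∘ₗ antipode k))

@[simp]
lemma twistedFlip_tmul (n : M) (p q : H) :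
    twistedFlip σ act (n ⊗ₜ[k] (p ⊗ₜ[k] q)) = act q n ⊗ₜ[k] (σ * antipode k p) := by
  simp [twistedFlip]

noncomputable def twistedAntipode : M ⊗[k] H →ₗ[k] M ⊗[k] H :=
  twistedFlip σ act ∘ₗ lTensor M comul

lemma twistedAntipode_tmul (n : M) (h : H) :
    twistedAntipode σ act (n ⊗ₜ[k] h) = twistedFlip σ act (n ⊗ₜ[k] comul h) :=
  rfl

/-- `skewAction act (z ⊗ₜ comul x)` is `x ▷ z`. -/
noncomputable def skewAction : (M ⊗[k] H) ⊗[k] (H ⊗[k] H) →ₗ[k] M ⊗[k] H :=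
  TensorProduct.map (lift act ∘ₗ (TensorProduct.comm k M H).toLinearMap)
      (mul' k H ∘ₗ (antipode k).lTensor H)
    ∘ₗ (tensorTensorTensorComm k M H H H).toLinearMap
    ∘ₗ (TensorProduct.comm k H H).toLinearMap.lTensor (M ⊗[k] H)

@[simp]
lemma skewAction_tmul (n : M) (g r s : H) :
    skewAction act ((n ⊗ₜ[k] g) ⊗ₜ[k] (r ⊗ₜ[k] s)) = act s n ⊗ₜ[k] (g * antipode k r) := by
  simp [skewAction, mul'_apply]

variable (k M H) in
noncomputable def tensorMulLeft : (M ⊗[k] H) ⊗[k] H →ₗ[k] M ⊗[k] H :=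
  (mul' k H ∘ₗ (TensorProduct.comm k H H).toLinearMap).lTensor M
    ∘ₗ (TensorProduct.assoc k M H H).toLinearMap

@[simp]
lemma tensorMulLeft_tmul (n : M) (f x : H) :
    tensorMulLeft k H M ((n ⊗ₜ[k] f) ⊗ₜ[k] x) = n ⊗ₜ[k] (x * f) := by
  simp [tensorMulLeft, mul'_apply]

noncomputable def conjugateTensorAct (m : M) : H ⊗[k] (H ⊗[k] H) →ₗ[k] H ⊗[k] M :=
  (mul' k H ∘ₗ (TensorProduct.comm k H H).toLinearMap).rTensor M
    ∘ₗ (TensorProduct.assoc k H H M).symm.toLinearMap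
    ∘ₗ ((TensorProduct.comm k M H).toLinearMap ∘ₗ (act.flip m).rTensor H).lTensor H
    ∘ₗ (mulLeft k σ ∘ₗ antipode k).rTensor (H ⊗[k] H)

@[simp]
lemma conjugateTensorAct_tmul (m : M) (p r s : H) :
    conjugateTensorAct σ act m (p ⊗ₜ[k] (r ⊗ₜ[k] s))
      = (s * (σ * antipode k p)) ⊗ₜ[k] act r m := by
  simp [conjugateTensorAct, mul'_apply]

variable {act}

lemma twistedFlip_mul (hact : ∀ x y n, act (x * y) n = act x (act y n))
    (n : M) (u v : H ⊗[k] H) :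
    twistedFlip σ act (n ⊗ₜ[k] (v * u))
      = skewAction act (twistedFlip σ act (n ⊗ₜ[k] u) ⊗ₜ[k] v) := by
  induction u using TensorProduct.induction_on with
  | zero => simp
  | add u₁ u₂ h₁ h₂ => simp only [mul_add, tmul_add, map_add, add_tmul, h₁, h₂]
  | tmul p q =>
    induction v using TensorProduct.induction_on with
    | zero => simp
    | add v₁ v₂ h₁ h₂ => simp only [add_mul, tmul_add, map_add, h₁, h₂]
    | tmul r s =>
      simp [Algebra.TensorProduct.tmul_mul_tmul, antipode_mul_antidistrib, hact, mul_assoc]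

lemma twistedAntipode_comp_tensorMulLeft (hact : ∀ x y n, act (x * y) n = act x (act y n)) :
    twistedAntipode σ act ∘ₗ tensorMulLeft k H M
      = skewAction act ∘ₗ TensorProduct.map (twistedAntipode σ act) comul := by
  ext n f x
  simp [twistedAntipode_tmul, Bialgebra.comul_mul, twistedFlip_mul σ hact]

variable (act) in
lemma skewAction_map_mk_comul (m : M) (h : H) :
    skewAction act (TensorProduct.map (mk k M H m) comul (comul h)) = act h m ⊗ₜ[k] 1 := by
  have hskew : skewAction act ∘ₗ (mk k M H m).rTensor (H ⊗[k] H) ∘ₗ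
      (TensorProduct.assoc k H H H).toLinearMap
      = (TensorProduct.comm k H M).toLinearMap ∘ₗ
          TensorProduct.map (mul' k H ∘ₗ (antipode k).lTensor H) (act.flip m) := by
    ext p r s
    simp [mul'_apply]
  calc skewAction act (TensorProduct.map (mk k M H m) comul (comul h))
      = skewAction act ((mk k M H m).rTensor (H ⊗[k] H)
          (TensorProduct.assoc k H H H (comul.rTensor H (comul h)))) := by
        rw [coassoc_apply, ← rTensor_comp_lTensor, comp_apply]
    _ = TensorProduct.comm k H M (TensorProduct.map (Algebra.linearMap k H ∘ₗ counit)
          (act.flip m) (comul h)) := by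
        have := LinearMap.congr_fun hskew (comul.rTensor H (comul h))
        simp only [comp_apply, LinearEquiv.coe_coe] at this
        rw [this, map_rTensor, comp_assoc, mul_antipode_lTensor_comul]
    _ = act h m ⊗ₜ[k] 1 := by
        rw [← map_rTensor, rTensor_counit_comul]
        simp

variable {σ}

lemma tensorMulLeft_rTensor_twistedAntipode_comul (hσ : IsGroupLikeElem k σ)
    (hact : ∀ x y n, act (x * y) n = act x (act y n)) (hσact : ∀ n, act σ n = n)
    (hinv : Function.Involutive (twistedAntipode σ act)) (m : M) (h : H) :
    tensorMulLeft k H M ((twistedAntipode σ act ∘ₗ mk k M H m).rTensor H (comul h))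
      = act h m ⊗ₜ[k] σ := by
  apply hinv.injective
  have hSS : twistedAntipode σ act ∘ₗ twistedAntipode σ act ∘ₗ mk k M H m = mk k M H m :=
    LinearMap.ext fun g => hinv (m ⊗ₜ g)
  calc twistedAntipode σ act
        (tensorMulLeft k H M ((twistedAntipode σ act ∘ₗ mk k M H m).rTensor H (comul h)))
      = skewAction act (TensorProduct.map (twistedAntipode σ act) comul
          ((twistedAntipode σ act ∘ₗ mk k M H m).rTensor H (comul h))) :=
        LinearMap.congr_fun (twistedAntipode_comp_tensorMulLeft σ hact) _
    _ = skewAction act (TensorProduct.map (mk k M H m) comul (comul h)) := by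
        rw [map_rTensor, hSS]
    _ = act h m ⊗ₜ[k] 1 := skewAction_map_mk_comul act m h
    _ = twistedAntipode σ act (act h m ⊗ₜ[k] σ) := by
        simp [twistedAntipode_tmul, hσ.comul_eq_tmul_self, hσ.mul_antipode_cancel, hσact]

lemma conjugateTensorAct_comul_comul (hσ : IsGroupLikeElem k σ)
    (hact : ∀ x y n, act (x * y) n = act x (act y n)) (hσact : ∀ n, act σ n = n)
    (hinv : Function.Involutive (twistedAntipode σ act)) (m : M) (h : H) :
    conjugateTensorAct σ act m (comul.lTensor H (comul h)) = σ ⊗ₜ[k] act h m := by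
  have hcomm : conjugateTensorAct σ act m ∘ₗ (TensorProduct.assoc k H H H).toLinearMap
      = (TensorProduct.comm k M H).toLinearMap ∘ₗ tensorMulLeft k H M
          ∘ₗ (twistedFlip σ act ∘ₗ mk k M (H ⊗[k] H) m).rTensor H := by
    ext p r s
    simp
  have hmk : twistedFlip σ act ∘ₗ mk k M (H ⊗[k] H) m ∘ₗ comul
      = twistedAntipode σ act ∘ₗ mk k M H m := rfl
  calc conjugateTensorAct σ act m (comul.lTensor H (comul h))
      = conjugateTensorAct σ act m
          (TensorProduct.assoc k H H H (comul.rTensor H (comul h))) := by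
        rw [coassoc_apply]
    _ = TensorProduct.comm k M H (tensorMulLeft k H M
          ((twistedFlip σ act ∘ₗ mk k M (H ⊗[k] H) m ∘ₗ comul).rTensor H (comul h))) := by
        simpa [rTensor_comp] using LinearMap.congr_fun hcomm (comul.rTensor H (comul h))
    _ = σ ⊗ₜ[k] act h m := by
        rw [hmk, tensorMulLeft_rTensor_twistedAntipode_comul hσ hact hσact hinv, comm_tmul]

end TwistedAntipode

theorem statement17_general (k : Type*) [CommRing k] (H : Type*) [Ring H] [HopfAlgebra k H]
    (A : Type*) [Ring A] [Algebra k A]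
    (M : Type*) [AddCommGroup M] [Module k M] [Module H M]
    -- the coaction of `H` on `A`
    (ρ : A →ₗ[k] H ⊗[k] A)
    -- `σ` is grouplike
    (σ : H) (hΔσ : comul (R := k) σ = σ ⊗ₜ[k] σ) (hεσ : counit (R := k) σ = 1)
    -- the `k`-bilinear action of `H` on `M`
    (actHM : H →ₗ[k] M →ₗ[k] M)
    (hactHM : ∀ (h : H) (m : M), actHM h m = h • m)
    -- `(M, σ)` is a matched pair …
    (hmp : ∀ m : M, σ • m = m) :
    -- … in involution:  `Ŝ(m ⊗ h) = h⁽²⁾m ⊗ σS(h⁽¹⁾)` squares to the identity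
    letI Shat : M ⊗[k] H →ₗ[k] M ⊗[k] H :=
      (TensorProduct.comm k H M).toLinearMap
        ∘ₗ LinearMap.lTensor H (TensorProduct.lift actHM.flip)
        ∘ₗ (TensorProduct.leftComm k M H H).toLinearMap
        ∘ₗ LinearMap.lTensor M
            (LinearMap.rTensor H
              (LinearMap.mulLeft k σ ∘ₗ HopfAlgebra.antipode (R := k)))
        ∘ₗ LinearMap.lTensor M (comul (R := k))
    ∀ _hinv : ∀ z : M ⊗[k] H, Shat (Shat z) = z,
    -- conclusion: `a⁽⁻¹⁾σS(a⁽⁻³⁾) ⊗ a⁽⁻²⁾m ⊗ a⁽⁰⁾ = σ ⊗ a⁽⁻¹⁾m ⊗ a⁽⁰⁾`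
    ∀ (a : A) (m : M),
      ((LinearMap.rTensor (M ⊗[k] A)
            (LinearMap.mul' k H ∘ₗ (TensorProduct.comm k H H).toLinearMap))
        ∘ₗ (TensorProduct.assoc k H H (M ⊗[k] A)).symm.toLinearMap
        ∘ₗ LinearMap.lTensor H (TensorProduct.leftComm k M H A).toLinearMap
        ∘ₗ LinearMap.lTensor H (LinearMap.rTensor (H ⊗[k] A) (actHM.flip m))
        ∘ₗ LinearMap.rTensor (H ⊗[k] (H ⊗[k] A))
            (LinearMap.mulLeft k σ ∘ₗ HopfAlgebra.antipode (R := k)))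
        (LinearMap.lTensor H
            ((TensorProduct.assoc k H H A).toLinearMap
              ∘ₗ LinearMap.rTensor A (comul (R := k)))
          (((TensorProduct.assoc k H H A).toLinearMap
              ∘ₗ LinearMap.rTensor A (comul (R := k))) (ρ a)))
        = σ ⊗ₜ[k] (LinearMap.rTensor A (actHM.flip m) (ρ a)) := by
  intro hinv a m
  have hσ : IsGroupLikeElem k σ := ⟨hεσ, hΔσ⟩
  have hact : ∀ x y n, actHM (x * y) n = actHM x (actHM y n) := by simp [hactHM, mul_smul]
  have hσact : ∀ n, actHM σ n = n := by simpa [hactHM] using hmp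
  have hconj : conjugateTensorAct σ actHM m ∘ₗ comul.lTensor H ∘ₗ comul
      = mk k H M σ ∘ₗ actHM.flip m :=
    LinearMap.ext (conjugateTensorAct_comul_comul hσ hact hσact hinv m)
  have hassoc : (TensorProduct.assoc k H M A).toLinearMap ∘ₗ (mk k H M σ).rTensor A
      = mk k H (M ⊗[k] A) σ := by
    ext; rfl
  rw [apply_iterated_comul_eq_assoc_rTensor (conjugateTensorAct σ actHM m) _
      (fun p r s b => by simp [LinearMap.mul'_apply, leftComm_tmul]),
    hconj, LinearMap.rTensor_comp, LinearMap.comp_apply]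
  exact LinearMap.congr_fun hassoc _

/-- Let `(A, H, M)` be a left Hopf triple over a commutative ring `k`
with grouplike `σ ∈ H` such that `(M,σ)` is a matched pair in involution.  Then for all
`a ∈ A`, `m ∈ M` the identity
`a⁽⁻¹⁾σS(a⁽⁻³⁾) ⊗ a⁽⁻²⁾m ⊗ a⁽⁰⁾ = σ ⊗ a⁽⁻¹⁾m ⊗ a⁽⁰⁾` holds in `H ⊗ (M ⊗ A)`. -/
theorem statement17 (k : Type*) [CommRing k] (H : Type*) [Ring H] [HopfAlgebra k H]
    (A : Type*) [Ring A] [Algebra k A]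
    (M : Type*) [AddCommGroup M] [Module k M] [Module H M]
    [IsScalarTower k H M] [SMulCommClass k H M]
    -- the coaction of `H` on `A`
    (ρ : A →ₗ[k] H ⊗[k] A)
    -- coassociativity and counitality of the coaction
    (hcoassoc : ∀ a : A,
      TensorProduct.assoc k H H A (LinearMap.rTensor A (comul (R := k)) (ρ a)) =
        LinearMap.lTensor H ρ (ρ a))
    (hcounit : ∀ a : A,
      TensorProduct.lid k A (LinearMap.rTensor A (counit (R := k)) (ρ a)) = a)
    -- the coaction is an algebra homomorphism
    (hmul : ∀ a b : A, ρ (a * b) = ρ a * ρ b) (hone : ρ 1 = 1)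
    -- `σ` is grouplike
    (σ : H) (hΔσ : comul (R := k) σ = σ ⊗ₜ[k] σ) (hεσ : counit (R := k) σ = 1)
    -- the `k`-bilinear action of `H` on `M`
    (actHM : H →ₗ[k] M →ₗ[k] M)
    (hactHM : ∀ (h : H) (m : M), actHM h m = h • m)
    -- `(M, σ)` is a matched pair …
    (hmp : ∀ m : M, σ • m = m) :
    -- … in involution:  `Ŝ(m ⊗ h) = h⁽²⁾m ⊗ σS(h⁽¹⁾)` squares to the identity
    letI Shat : M ⊗[k] H →ₗ[k] M ⊗[k] H :=
      (TensorProduct.comm k H M).toLinearMap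
        ∘ₗ LinearMap.lTensor H (TensorProduct.lift actHM.flip)
        ∘ₗ (TensorProduct.leftComm k M H H).toLinearMap
        ∘ₗ LinearMap.lTensor M
            (LinearMap.rTensor H
              (LinearMap.mulLeft k σ ∘ₗ HopfAlgebra.antipode (R := k)))
        ∘ₗ LinearMap.lTensor M (comul (R := k))
    ∀ _hinv : ∀ z : M ⊗[k] H, Shat (Shat z) = z,
    -- conclusion: `a⁽⁻¹⁾σS(a⁽⁻³⁾) ⊗ a⁽⁻²⁾m ⊗ a⁽⁰⁾ = σ ⊗ a⁽⁻¹⁾m ⊗ a⁽⁰⁾`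
    ∀ (a : A) (m : M),
      ((LinearMap.rTensor (M ⊗[k] A)
            (LinearMap.mul' k H ∘ₗ (TensorProduct.comm k H H).toLinearMap))
        ∘ₗ (TensorProduct.assoc k H H (M ⊗[k] A)).symm.toLinearMap
        ∘ₗ LinearMap.lTensor H (TensorProduct.leftComm k M H A).toLinearMap
        ∘ₗ LinearMap.lTensor H (LinearMap.rTensor (H ⊗[k] A) (actHM.flip m))
        ∘ₗ LinearMap.rTensor (H ⊗[k] (H ⊗[k] A))
            (LinearMap.mulLeft k σ ∘ₗ HopfAlgebra.antipode (R := k)))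
        (LinearMap.lTensor H
            ((TensorProduct.assoc k H H A).toLinearMap
              ∘ₗ LinearMap.rTensor A (comul (R := k)))
          (((TensorProduct.assoc k H H A).toLinearMap
              ∘ₗ LinearMap.rTensor A (comul (R := k))) (ρ a)))
        = σ ⊗ₜ[k] (LinearMap.rTensor A (actHM.flip m) (ρ a)) :=
  statement17_general k H A M ρ σ hΔσ hεσ actHM hactHM hmp
end
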